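/- arXiv:2008.09177 — 6 statements merged into one kernel-verified Lean document; each statement's English description precedes it below -/
import Mathlib

section
/- Let $x:[t_0,\infty)\to(0,\infty)$ be continuously differentiable, $\bar{x}>0$, and $0<\alpha\le 1$. Then for every $t\ge t_0$, ${}^{C}_{t_0}D^{\alpha}_t\left[x(t)-\bar{x}-\bar{x}\ln\frac{x(t)}{\bar{x}}\right] \le \left(1-\frac{\bar{x}}{x(t)}\right)\,{}^{C}_{t_0}D^{\alpha}_t\,x(t)$. -/
/-!
The Lyapunov function `V u = u - x̄ - x̄ log (u / x̄)` is convex with `V' u = 1 - x̄ / u`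
(the tangent inequality is `log r ≤ r - 1`), so `g = V ∘ x - V' (x t) • x` attains its
minimum over `[t₀, t]` at `t`, and the claim is `∫_{t₀}^t g' y (t - y)^{-α} dy ≤ 0`.
Integrating by parts on `[t₀, s]` against the nonnegative increasing weight `(t - y)^{-α}`
bounds the partial integral by `(g s - g t) (t - s)^{-α}`, which is `O((t - s)^{1-α})`
since `g` is differentiable at `t`, hence tends to `0` as `s → t⁻` because `α < 1`.
-/

open MeasureTheory Filter Set

/-- Caputo fractional derivative of order `α ∈ (0,1]`. -/
noncomputable def caputo (t0 α : ℝ) (u : ℝ → ℝ) (t : ℝ) : ℝ :=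
  if α = 1 then deriv u t
  else (1 / Real.Gamma (1 - α)) * ∫ y in t0..t, deriv u y / (t - y) ^ α

open intervalIntegral
open scoped Topology

noncomputable def volterraLyapunov (xbar u : ℝ) : ℝ :=
  u - xbar - xbar * Real.log (u / xbar)

theorem hasDerivAt_volterraLyapunov {xbar u : ℝ} (hxbar : xbar ≠ 0) (hu : u ≠ 0) :
    HasDerivAt (volterraLyapunov xbar) (1 - xbar / u) u := by
  have hlog := ((hasDerivAt_id' u).div_const xbar).log (div_ne_zero hu hxbar)
  refine (((hasDerivAt_id' u).sub_const xbar).sub (hlog.const_mul xbar)).congr_deriv ?_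
  field_simp

theorem volterraLyapunov_add_mul_sub_le {xbar a b : ℝ} (hxbar : 0 < xbar) (ha : 0 < a)
    (hb : 0 < b) :
    volterraLyapunov xbar b + (1 - xbar / b) * (a - b) ≤ volterraLyapunov xbar a := by
  have hlog : Real.log (a / b) ≤ a / b - 1 := Real.log_le_sub_one_of_pos (div_pos ha hb)
  have hlog_div : Real.log (a / xbar) - Real.log (b / xbar) = Real.log (a / b) := by
    rw [Real.log_div ha.ne' hxbar.ne', Real.log_div hb.ne' hxbar.ne',
      Real.log_div ha.ne' hb.ne']
    ring
  have hgap : volterraLyapunov xbar a - volterraLyapunov xbar b - (1 - xbar / b) * (a - b)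
      = xbar * (a / b - 1 - Real.log (a / b)) := by
    rw [← hlog_div]
    unfold volterraLyapunov
    field_simp
    ring
  nlinarith [mul_nonneg hxbar.le (sub_nonneg.2 hlog)]

section WeightedIntegral

variable {t0 t α : ℝ}

theorem intervalIntegrable_sub_rpow_neg (hα : α < 1) :
    IntervalIntegrable (fun y => (t - y) ^ (-α)) volume t0 t := by
  simpa using ((intervalIntegrable_rpow' (a := 0) (b := t - t0) (r := -α)
    (by linarith)).comp_sub_left t).symm

theorem div_rpow_eq_mul_rpow_neg (a : ℝ) {z : ℝ} (hz : 0 ≤ z) : a / z ^ α = a * z ^ (-α) := by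
  rw [Real.rpow_neg hz, div_eq_mul_inv]

theorem intervalIntegrable_div_sub_rpow {f : ℝ → ℝ} (hα : α < 1) (ht : t0 ≤ t)
    (hf : ContinuousOn f (Icc t0 t)) :
    IntervalIntegrable (fun y => f y / (t - y) ^ α) volume t0 t := by
  refine ((intervalIntegrable_sub_rpow_neg (t0 := t0) (t := t) hα).continuousOn_mul
    (uIcc_of_le ht ▸ hf)).congr fun y hy => ?_
  exact (div_rpow_eq_mul_rpow_neg _ (sub_nonneg.2 (uIoc_of_le ht ▸ hy).2)).symm

theorem hasDerivAt_sub_rpow_neg {y : ℝ} (hy : y < t) :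
    HasDerivAt (fun z => (t - z) ^ (-α)) (α * (t - y) ^ (-α - 1)) y := by
  convert ((hasDerivAt_id' y).const_sub t).rpow_const (p := -α) (Or.inl (sub_pos.2 hy).ne')
    using 1
  ring

theorem integral_mul_deriv_le_of_nonneg {W W' h h' : ℝ → ℝ} {a b : ℝ} (hab : a ≤ b)
    (hW : ∀ y ∈ Icc a b, HasDerivAt W (W' y) y) (hh : ∀ y ∈ Icc a b, HasDerivAt h (h' y) y)
    (hW'int : IntervalIntegrable W' volume a b) (hh'int : IntervalIntegrable h' volume a b)
    (hW'0 : ∀ y ∈ Icc a b, 0 ≤ W' y) (hWa : 0 ≤ W a) (hh0 : ∀ y ∈ Icc a b, 0 ≤ h y) :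
    ∫ y in a..b, W y * h' y ≤ W b * h b := by
  rw [integral_mul_deriv_eq_deriv_mul (uIcc_of_le hab ▸ hW) (uIcc_of_le hab ▸ hh)
    hW'int hh'int]
  have hboundary : 0 ≤ W a * h a := mul_nonneg hWa (hh0 a (left_mem_Icc.2 hab))
  have hbulk : 0 ≤ ∫ y in a..b, W' y * h y :=
    integral_nonneg hab fun y hy => mul_nonneg (hW'0 y hy) (hh0 y hy)
  linarith

theorem tendsto_sub_mul_sub_rpow_neg {g : ℝ → ℝ} {g't : ℝ} (hg : HasDerivAt g g't t)
    (hα : α < 1) :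
    Tendsto (fun s => (g s - g t) * (t - s) ^ (-α)) (𝓝[<] t) (𝓝 0) := by
  have hslope : Tendsto (slope g t) (𝓝[<] t) (𝓝 g't) :=
    (hasDerivAt_iff_tendsto_slope.1 hg).mono_left (nhdsWithin_mono _ fun s hs => ne_of_lt hs)
  have hpow : Tendsto (fun s => (t - s) ^ (1 - α)) (𝓝[<] t) (𝓝 0) := by
    have := ((Real.continuous_rpow_const (by linarith : 0 ≤ 1 - α)).comp
      (continuous_sub_left t)).tendsto t
    simpa [Function.comp_def, Real.zero_rpow (by linarith : 1 - α ≠ 0)] using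
      this.mono_left nhdsWithin_le_nhds
  have hprod := hslope.neg.mul hpow
  rw [mul_zero] at hprod
  refine hprod.congr' ?_
  filter_upwards [self_mem_nhdsWithin] with s (hs : s < t)
  have hts : 0 < t - s := sub_pos.2 hs
  rw [slope_def_field, show 1 - α = 1 + -α by ring, Real.rpow_add hts, Real.rpow_one]
  field_simp [(sub_neg.2 hs).ne]
  ring

theorem integral_deriv_div_sub_rpow_nonpos_of_isMinOn {g g' : ℝ → ℝ}
    (hα0 : 0 ≤ α) (hα1 : α < 1) (ht : t0 ≤ t)
    (hg : ∀ y ∈ Icc t0 t, HasDerivAt g (g' y) y) (hg' : ContinuousOn g' (Icc t0 t))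
    (hmin : IsMinOn g (Icc t0 t) t) :
    ∫ y in t0..t, g' y / (t - y) ^ α ≤ 0 := by
  rcases ht.eq_or_lt with rfl | htt
  · simp
  have hint := intervalIntegrable_div_sub_rpow hα1 ht hg'
  have hprimitive : Tendsto (fun s => ∫ y in t0..s, g' y / (t - y) ^ α) (𝓝[<] t)
      (𝓝 (∫ y in t0..t, g' y / (t - y) ^ α)) := by
    have hcont := continuousOn_primitive_interval' hint left_mem_uIcc
    rw [uIcc_of_le ht] at hcont
    exact ((hcont t (right_mem_Icc.2 ht)).mono_of_mem_nhdsWithin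
      (mem_of_superset (Ico_mem_nhdsLT htt) Ico_subset_Icc_self)).tendsto
  refine le_of_tendsto_of_tendsto hprimitive
    (tendsto_sub_mul_sub_rpow_neg (hg t (right_mem_Icc.2 ht)) hα1) ?_
  filter_upwards [Ico_mem_nhdsLT htt] with s ⟨hs0, hst⟩
  have hsub : Icc t0 s ⊆ Icc t0 t := Icc_subset_Icc_right hst.le
  rw [integral_congr fun y hy => div_rpow_eq_mul_rpow_neg (g' y)
    (sub_nonneg.2 ((uIcc_of_le hs0 ▸ hy).2.trans hst.le))]
  simp_rw [mul_comm (g' _)]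
  rw [mul_comm (g s - g t)]
  refine integral_mul_deriv_le_of_nonneg hs0
    (fun y hy => hasDerivAt_sub_rpow_neg (hy.2.trans_lt hst))
    (fun y hy => (hg y (hsub hy)).sub_const (g t)) ?_
    ((hg'.mono hsub).intervalIntegrable_of_Icc hs0) ?_ ?_
    (fun y hy => sub_nonneg.2 (hmin (hsub hy)))
  · refine (continuousOn_const.mul ((continuous_sub_left t).continuousOn.rpow_const
      fun y hy => Or.inl ?_)).intervalIntegrable
    exact (sub_pos.2 ((uIcc_of_le hs0 ▸ hy).2.trans_lt hst)).ne'
  · exact fun y hy => mul_nonneg hα0 (Real.rpow_nonneg (by linarith [hy.2]) _)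
  · exact Real.rpow_nonneg (by linarith) _

end WeightedIntegral

theorem caputo_eq_integral_of_hasDerivAt {u u' : ℝ → ℝ} {t0 t α : ℝ} (hα : α ≠ 1)
    (ht : t0 ≤ t) (hu : ∀ y ∈ Icc t0 t, HasDerivAt u (u' y) y) :
    caputo t0 α u t = 1 / Real.Gamma (1 - α) * ∫ y in t0..t, u' y / (t - y) ^ α := by
  rw [caputo, if_neg hα, integral_congr fun y hy => by
    rw [(hu y (uIcc_of_le ht ▸ hy)).deriv]]

theorem caputo_le_const_mul_of_isMinOn {u u' v v' : ℝ → ℝ} {t0 t α k : ℝ}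
    (hα0 : 0 ≤ α) (hα1 : α < 1) (ht : t0 ≤ t)
    (hu : ∀ y ∈ Icc t0 t, HasDerivAt u (u' y) y) (hu' : ContinuousOn u' (Icc t0 t))
    (hv : ∀ y ∈ Icc t0 t, HasDerivAt v (v' y) y) (hv' : ContinuousOn v' (Icc t0 t))
    (hmin : IsMinOn (fun y => u y - k * v y) (Icc t0 t) t) :
    caputo t0 α u t ≤ k * caputo t0 α v t := by
  rw [caputo_eq_integral_of_hasDerivAt hα1.ne ht hu,
    caputo_eq_integral_of_hasDerivAt hα1.ne ht hv]
  have hnonpos := integral_deriv_div_sub_rpow_nonpos_of_isMinOn hα0 hα1 ht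
    (fun y hy => (hu y hy).sub ((hv y hy).const_mul k)) (hu'.sub (continuousOn_const.mul hv'))
    hmin
  simp_rw [sub_div, mul_div_assoc] at hnonpos
  rw [integral_sub (intervalIntegrable_div_sub_rpow hα1 ht hu')
    ((intervalIntegrable_div_sub_rpow hα1 ht hv').const_mul k),
    intervalIntegral.integral_const_mul] at hnonpos
  have hΓ : 0 < 1 / Real.Gamma (1 - α) := one_div_pos.2 (Real.Gamma_pos_of_pos (by linarith))
  rw [mul_left_comm]
  exact mul_le_mul_of_nonneg_left (by linarith) hΓ.le

theorem caputo_log_volterra_estimate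
    (t0 α xbar : ℝ) (x : ℝ → ℝ)
    (hx : ContDiff ℝ 1 x) (hxpos : ∀ t, t0 ≤ t → 0 < x t)
    (hxbar : 0 < xbar) (hα0 : 0 < α) (hα1 : α ≤ 1)
    (t : ℝ) (ht : t0 ≤ t) :
    caputo t0 α (fun τ => x τ - xbar - xbar * Real.log (x τ / xbar)) t
      ≤ (1 - xbar / x t) * caputo t0 α x t := by
  have hdx : ∀ y, HasDerivAt x (deriv x y) y :=
    fun y => (hx.differentiable one_ne_zero y).hasDerivAt
  have hdV : ∀ y, 0 < x y →
      HasDerivAt (fun τ => volterraLyapunov xbar (x τ)) ((1 - xbar / x y) * deriv x y) y :=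
    fun y hy => (hasDerivAt_volterraLyapunov hxbar.ne' hy.ne').comp y (hdx y)
  change caputo t0 α (fun τ => volterraLyapunov xbar (x τ)) t ≤ _
  rcases hα1.eq_or_lt with rfl | hα1
  · rw [caputo, caputo, if_pos rfl, if_pos rfl, (hdV t (hxpos t ht)).deriv]
  have hcont_dx := (hx.continuous_deriv le_rfl).continuousOn (s := Icc t0 t)
  refine caputo_le_const_mul_of_isMinOn hα0.le hα1 ht (fun y hy => hdV y (hxpos y hy.1))
    ?_ (fun y _ => hdx y) hcont_dx (isMinOn_iff.2 fun y hy => ?_)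
  · exact (continuousOn_const.sub (continuousOn_const.div hx.continuous.continuousOn
      fun y hy => (hxpos y hy.1).ne')).mul hcont_dx
  · have := volterraLyapunov_add_mul_sub_le hxbar (hxpos y hy.1) (hxpos t ht)
    linarith
end

section
/- Let $x:[t_0,\infty)\to(0,\infty)$ be continuously differentiable, $g:(0,\infty)\to(0,\infty)$ differentiable and strictly increasing, and $0<\alpha<1$. Then for each $t>t_0$, $\frac{1}{\Gamma(1-\alpha)}\int_{t_0}^{t}\frac{x'(y)}{(t-y)^{\alpha}}\left(1-\frac{g(x(t))}{g(x(y))}\right)dy \le 0$. -/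
/-!
With `φ s = 1 - g (x t) / g s`, the integrand is `(t - y) ^ (-α) * F' y` for the primitive
`F y = ∫ s in x t..x y, φ s` (the paper's `w`). Since `g` is increasing, `φ` changes sign from
`≤ 0` to `≥ 0` at `x t`, so `F ≥ 0`, and `F t = 0`. Integrating by parts on `[t0, c]` with the
increasing kernel `(t - y) ^ (-α)` bounds the integral by the boundary term
`(t - c) ^ (-α) * F c = O((t - c) ^ (1 - α))`, which vanishes as `c → t`.
-/

open MeasureTheory Set Topology Filter Asymptotics

theorem integral_rpow_neg_sub_mul_le {F f : ℝ → ℝ} {a b c α : ℝ} (hac : a ≤ c) (hcb : c < b)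
    (hα : 0 ≤ α) (hF : ∀ y ∈ Icc a c, HasDerivAt F (f y) y) (hf : ContinuousOn f (Icc a c))
    (hF0 : ∀ y ∈ Icc a c, 0 ≤ F y) :
    ∫ y in a..c, (b - y) ^ (-α) * f y ≤ (b - c) ^ (-α) * F c := by
  have hk : ∀ y ∈ Icc a c,
      HasDerivAt (fun y => (b - y) ^ (-α)) (α * (b - y) ^ (-α - 1)) y := fun y hy =>
    (((hasDerivAt_id y).const_sub b).rpow_const (Or.inl (sub_pos.2 (hy.2.trans_lt hcb)).ne')).congr_deriv
      (by simp)
  have hk' : ContinuousOn (fun y => α * (b - y) ^ (-α - 1)) (Icc a c) :=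
    continuousOn_const.mul <| (continuousOn_const.sub continuousOn_id).rpow_const
      fun y hy => Or.inl (sub_pos.2 (hy.2.trans_lt hcb)).ne'
  rw [← uIcc_of_le hac] at hk hk' hF hf
  rw [intervalIntegral.integral_mul_deriv_eq_deriv_mul hk hF hk'.intervalIntegrable
    hf.intervalIntegrable]
  have hinterior : 0 ≤ ∫ y in a..c, α * (b - y) ^ (-α - 1) * F y :=
    intervalIntegral.integral_nonneg hac fun y hy =>
      mul_nonneg (mul_nonneg hα (Real.rpow_nonneg (by linarith [hy.2]) _)) (hF0 y hy)
  have hleft : 0 ≤ (b - a) ^ (-α) * F a :=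
    mul_nonneg (Real.rpow_nonneg (by linarith) _) (hF0 a ⟨le_rfl, hac⟩)
  linarith

theorem integral_rpow_neg_sub_mul_nonpos {F f : ℝ → ℝ} {a b α : ℝ} (hab : a < b)
    (hα0 : 0 ≤ α) (hα1 : α < 1) (hF : ∀ y ∈ Icc a b, HasDerivAt F (f y) y)
    (hf : ContinuousOn f (Icc a b)) (hF0 : ∀ y ∈ Icc a b, 0 ≤ F y) (hFb : F b = 0) :
    ∫ y in a..b, (b - y) ^ (-α) * f y ≤ 0 := by
  have hkernel : IntervalIntegrable (fun y => (b - y) ^ (-α)) volume a b := by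
    simpa using ((intervalIntegral.intervalIntegrable_rpow' (r := -α) (by linarith)
      (a := 0) (b := b - a)).comp_sub_left b).symm
  have hint : IntervalIntegrable (fun y => (b - y) ^ (-α) * f y) volume a b :=
    hkernel.mul_continuousOn (by rwa [uIcc_of_le hab.le])
  have hprimitive : Tendsto (fun c => ∫ y in a..c, (b - y) ^ (-α) * f y) (𝓝[<] b)
      (𝓝 (∫ y in a..b, (b - y) ^ (-α) * f y)) := by
    have := intervalIntegral.continuousOn_primitive_interval' hint left_mem_uIcc b right_mem_uIcc
    rw [uIcc_of_le hab.le] at this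
    exact (this.mono_of_mem_nhdsWithin
      (mem_of_superset (Ioo_mem_nhdsLT hab) Ioo_subset_Icc_self)).tendsto
  have hboundary : Tendsto (fun c => (b - c) ^ (-α) * F c) (𝓝[<] b) (𝓝 0) := by
    have hO : (fun c => (b - c) ^ (-α) * F c) =O[𝓝[<] b] fun c => -(b - c) ^ (1 - α) := by
      refine ((isBigO_refl (fun c => (b - c) ^ (-α)) _).mul
        (((hF b ⟨hab.le, le_rfl⟩).isBigO_sub).mono nhdsWithin_le_nhds)).congr' ?_ ?_
      · filter_upwards with c
        simp [hFb]
      · filter_upwards [self_mem_nhdsWithin] with c hc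
        rw [show 1 - α = -α + 1 by ring, Real.rpow_add_one (sub_pos.2 hc.out).ne']
        ring
    refine hO.trans_tendsto ?_
    have : ContinuousAt (fun c => -(b - c) ^ (1 - α)) b :=
      ((continuous_const.sub continuous_id).continuousAt.rpow_const (Or.inr (by linarith))).neg
    simpa [Real.zero_rpow (by linarith : 1 - α ≠ 0)] using
      this.tendsto.mono_left nhdsWithin_le_nhds
  refine le_of_tendsto_of_tendsto hprimitive hboundary ?_
  filter_upwards [Ioo_mem_nhdsLT hab] with c hc
  have hsub : Icc a c ⊆ Icc a b := Icc_subset_Icc le_rfl hc.2.le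
  exact integral_rpow_neg_sub_mul_le hc.1.le hc.2 hα0 (fun y hy => hF y (hsub hy)) (hf.mono hsub)
    fun y hy => hF0 y (hsub hy)

theorem integral_one_sub_div_nonneg {g : ℝ → ℝ} (hgpos : ∀ s, 0 < s → 0 < g s)
    (hgmono : MonotoneOn g (Ioi 0)) {p q : ℝ} (hp : 0 < p) (hq : 0 < q) :
    0 ≤ ∫ s in p..q, (1 - g p / g s) := by
  rcases le_total p q with h | h
  · refine intervalIntegral.integral_nonneg h fun s hs => ?_
    have hs0 : 0 < s := hp.trans_le hs.1
    exact sub_nonneg.2 ((div_le_one (hgpos s hs0)).2 (hgmono hp hs0 hs.1))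
  · rw [intervalIntegral.integral_symm, ← intervalIntegral.integral_neg]
    refine intervalIntegral.integral_nonneg h fun s hs => ?_
    have hs0 : 0 < s := hq.trans_le hs.1
    exact neg_nonneg.2 (sub_nonpos.2 ((one_le_div (hgpos s hs0)).2 (hgmono hs0 hp hs.2)))

theorem hasDerivAt_integral_comp {φ u : ℝ → ℝ} {U : Set ℝ} {p u' y : ℝ} (hU : IsOpen U)
    (hφ : ContinuousOn φ U) (hpU : uIcc p (u y) ⊆ U) (hu : HasDerivAt u u' y) :
    HasDerivAt (fun z => ∫ s in p..u z, φ s) (φ (u y) * u') y :=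
  (intervalIntegral.integral_hasDerivAt_right (hφ.mono hpU).intervalIntegrable
    (hφ.stronglyMeasurableAtFilter hU _ (hpU right_mem_uIcc))
    (hφ.continuousAt (hU.mem_nhds (hpU right_mem_uIcc)))).comp y hu

theorem key_integral_inequality
    (t0 α : ℝ) (x g : ℝ → ℝ)
    (hx : ContDiff ℝ 1 x) (hxpos : ∀ t, t0 ≤ t → 0 < x t)
    (hgdiff : DifferentiableOn ℝ g (Set.Ioi (0:ℝ)))
    (hgpos : ∀ s, 0 < s → 0 < g s)
    (hgmono : StrictMonoOn g (Set.Ioi (0:ℝ)))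
    (hα0 : 0 < α) (hα1 : α < 1)
    (t : ℝ) (ht : t0 < t) :
    (1 / Real.Gamma (1 - α)) *
      ∫ y in t0..t, deriv x y / (t - y) ^ α * (1 - g (x t) / g (x y)) ≤ 0 := by
  set φ : ℝ → ℝ := fun s => 1 - g (x t) / g s
  have hφ : ContinuousOn φ (Ioi 0) :=
    continuousOn_const.sub (continuousOn_const.div hgdiff.continuousOn fun s hs => (hgpos s hs).ne')
  have hxt : 0 < x t := hxpos t ht.le
  have hF : ∀ y ∈ Icc t0 t,
      HasDerivAt (fun z => ∫ s in x t..x z, φ s) (φ (x y) * deriv x y) y := fun y hy =>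
    hasDerivAt_integral_comp isOpen_Ioi hφ
      (fun s hs => lt_of_lt_of_le (lt_inf_iff.2 ⟨hxt, hxpos y hy.1⟩) hs.1)
      (hx.differentiable one_ne_zero y).hasDerivAt
  have hf : ContinuousOn (fun y => φ (x y) * deriv x y) (Icc t0 t) :=
    (hφ.comp hx.continuous.continuousOn fun y hy => hxpos y hy.1).mul
      (hx.continuous_deriv le_rfl : Continuous (deriv x)).continuousOn
  have hI := integral_rpow_neg_sub_mul_nonpos ht hα0.le hα1 hF hf
    (fun y hy => integral_one_sub_div_nonneg hgpos hgmono.monotoneOn hxt (hxpos y hy.1))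
    intervalIntegral.integral_same
  refine mul_nonpos_of_nonneg_of_nonpos
    (one_div_nonneg.2 (Real.Gamma_pos_of_pos (by linarith)).le) ?_
  refine (intervalIntegral.integral_congr fun y hy => ?_).trans_le hI
  rw [uIcc_of_le ht.le] at hy
  simp only [φ, Real.rpow_neg (by linarith [hy.2] : 0 ≤ t - y)]
  ring
end

section
/- Let $x:[t_0,\infty)\to(0,\infty)$ be continuously differentiable, $g:(0,\infty)\to(0,\infty)$ differentiable and strictly increasing, and fix $t>t_0$. Define $w(y)=x(y)-x(t)-\int_{x(t)}^{x(y)}\frac{g(x(t))}{g(s)}\,ds$. Then $\lim_{y\to t^-}\frac{(t-y)^{-\alpha}}{\Gamma(1-\alpha)}\,w(y)=0$ for every $\alpha\in(0,1)$. -/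
/-!
Since `g (x t) / g s = 1` at `s = x t`, the fundamental theorem of calculus gives
`w' t = x' t * (1 - g (x t) / g (x t)) = 0`; together with `w t = 0` this makes `w y = o(t - y)`
as `y → t⁻`. Writing `(t - y) ^ (-α) * w y = (t - y) ^ (1 - α) * (w y / (t - y))`, both factors
tend to `0` because `α < 1`; no L'Hôpital argument is needed.
-/

open MeasureTheory Set Filter
open scoped Topology

theorem hasDerivAt_sub_sub_intervalIntegral_comp {f x : ℝ → ℝ} {t x' : ℝ}
    (hx : HasDerivAt x x' t) (hfm : StronglyMeasurableAtFilter f (𝓝 (x t)))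
    (hfc : ContinuousAt f (x t)) :
    HasDerivAt (fun y => x y - x t - ∫ s in x t..x y, f s) ((1 - f (x t)) * x') t := by
  have hF : HasDerivAt (fun u => ∫ s in x t..u, f s) (f (x t)) (x t) :=
    intervalIntegral.integral_hasDerivAt_right IntervalIntegrable.refl hfm hfc
  rw [sub_mul, one_mul]
  exact (hx.sub_const (x t)).sub (hF.comp t hx)

theorem tendsto_sub_rpow_nhdsLT {t β : ℝ} (hβ : 0 < β) :
    Tendsto (fun y => (t - y) ^ β) (𝓝[<] t) (𝓝 0) := by
  have hsub : Tendsto (fun y => t - y) (𝓝[<] t) (𝓝 0) := by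
    simpa using ((tendsto_const_nhds (x := t)).sub (tendsto_id (x := 𝓝 t))).mono_left (nhdsWithin_le_nhds (s := Iio t))
  simpa [Function.comp_def, Real.zero_rpow hβ.ne'] using
    (Real.continuousAt_rpow_const 0 β (Or.inr hβ.le)).tendsto.comp hsub

theorem tendsto_div_sub_nhdsLT_of_hasDerivWithinAt_zero {w : ℝ → ℝ} {t : ℝ}
    (hw : HasDerivWithinAt w 0 (Iio t) t) (hwt : w t = 0) :
    Tendsto (fun y => w y / (t - y)) (𝓝[<] t) (𝓝 0) := by
  have h := (hasDerivWithinAt_iff_tendsto_slope.mp hw).neg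
  rw [sdiff_singleton_eq_self self_notMem_Iio, neg_zero] at h
  refine h.congr fun y => ?_
  rw [slope_def_field, hwt, sub_zero, ← neg_div, ← neg_sub t y, neg_div_neg_eq]

theorem tendsto_sub_rpow_neg_mul_nhdsLT {w : ℝ → ℝ} {t α : ℝ}
    (hw : HasDerivWithinAt w 0 (Iio t) t) (hwt : w t = 0) (hα : α < 1) :
    Tendsto (fun y => (t - y) ^ (-α) * w y) (𝓝[<] t) (𝓝 0) := by
  have h := (tendsto_sub_rpow_nhdsLT (t := t) (sub_pos.mpr hα)).mul
    (tendsto_div_sub_nhdsLT_of_hasDerivWithinAt_zero hw hwt)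
  rw [zero_mul] at h
  refine h.congr' ?_
  filter_upwards [self_mem_nhdsWithin] with y (hy : y < t)
  have hty : 0 < t - y := sub_pos.mpr hy
  rw [sub_eq_add_neg 1 α, Real.rpow_add hty, Real.rpow_one]
  field_simp

theorem boundary_limit_zero_general
    (t0 : ℝ) (x g : ℝ → ℝ)
    (hx : ContDiff ℝ 1 x) (hxpos : ∀ t, t0 ≤ t → 0 < x t)
    (hgdiff : DifferentiableOn ℝ g (Set.Ioi (0:ℝ)))
    (hgpos : ∀ s, 0 < s → 0 < g s)
    (t : ℝ) (ht : t0 < t)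
    (w : ℝ → ℝ)
    (hw : ∀ y, w y = x y - x t - ∫ s in (x t)..(x y), g (x t) / g s)
    (α : ℝ) (hα1 : α < 1) :
    Tendsto (fun y => (t - y) ^ (-α) / Real.Gamma (1 - α) * w y)
      (nhdsWithin t (Set.Iio t)) (nhds 0) := by
  have hxt : 0 < x t := hxpos t ht.le
  have hf : ContinuousOn (fun s => g (x t) / g s) (Ioi 0) :=
    continuousOn_const.div hgdiff.continuousOn fun s hs => (hgpos s hs).ne'
  have hwd : HasDerivAt w 0 t := by
    have h := hasDerivAt_sub_sub_intervalIntegral_comp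
      ((hx.differentiable one_ne_zero t).hasDerivAt)
      (hf.stronglyMeasurableAtFilter isOpen_Ioi _ hxt) (hf.continuousAt (Ioi_mem_nhds hxt))
    rw [div_self (hgpos _ hxt).ne', sub_self, zero_mul] at h
    exact h.congr_of_eventuallyEq (.of_forall hw)
  have hwt : w t = 0 := by simp [hw]
  simpa [div_mul_eq_mul_div] using
    (tendsto_sub_rpow_neg_mul_nhdsLT hwd.hasDerivWithinAt hwt hα1).div_const (Real.Gamma (1 - α))

theorem boundary_limit_zero
    (t0 : ℝ) (x g : ℝ → ℝ)
    (hx : ContDiff ℝ 1 x) (hxpos : ∀ t, t0 ≤ t → 0 < x t)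
    (hgdiff : DifferentiableOn ℝ g (Set.Ioi (0:ℝ)))
    (hgpos : ∀ s, 0 < s → 0 < g s)
    (hgmono : StrictMonoOn g (Set.Ioi (0:ℝ)))
    (t : ℝ) (ht : t0 < t)
    (w : ℝ → ℝ)
    (hw : ∀ y, w y = x y - x t - ∫ s in (x t)..(x y), g (x t) / g s)
    (α : ℝ) (hα0 : 0 < α) (hα1 : α < 1) :
    Tendsto (fun y => (t - y) ^ (-α) / Real.Gamma (1 - α) * w y)
      (nhdsWithin t (Set.Iio t)) (nhds 0) :=
  boundary_limit_zero_general t0 x g hx hxpos hgdiff hgpos t ht w hw α hα1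
end

section
/- For the SICA vector field $f(S,I,C,A)=(\Lambda-\mu S-\beta SI,\ \beta SI-(\rho+\phi+\mu)I+\alpha A+\omega C,\ \phi I-\xi_2 C,\ \rho I-\xi_1 A)$ with positive parameters, $\xi_1=\alpha+\mu+d$, $\xi_2=\omega+\mu$, suppose $(S^*,I^*,C^*,A^*)$ is an equilibrium with all coordinates positive. Define $V_1=\sum$ of Volterra terms: $V_1(S,I,C,A)=S-S^*-S^*\ln\frac{S}{S^*}+I-I^*-I^*\ln\frac{I}{I^*}+\frac{\omega}{\xi_2}\left(C-C^*-C^*\ln\frac{C}{C^*}\right)+\frac{\alpha}{\xi_1}\left(A-A^*-A^*\ln\frac{A}{A^*}\right)$. Then $\nabla V_1\cdot f=(\beta I^*S^*+\mu S^*)\left(2-\frac{S}{S^*}-\frac{S^*}{S}\right)+\alpha A^*\left(2-\frac{AI^*}{A^*I}-\frac{A^*I}{AI^*}\right)+\omega C^*\left(2-\frac{CI^*}{C^*I}-\frac{C^*I}{CI^*}\right)\le 0$ at every point with positive coordinates. -/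
/-
After the equilibrium conditions are used to eliminate `Λ`, `φ / ξ2`, `ρ / ξ1` and `ρ + φ + μ`,
the derivative of `V₁` splits into three two-compartment blocks: the infection block `S → I`
and the transfer blocks `I ⇄ C`, `I ⇄ A`. In the ratios
`u = X / X*`, `v = I / I*` each transfer block is `X* (u - v) (1/u - 1/v) = X* (2 - u/v - v/u)`,
and the infection block collapses to `(β I* S* + μ S*) (2 - u - 1/u)`; each of these is
nonpositive by AM-GM.
-/

lemma two_sub_div_sub_div_nonpos {x y : ℝ} (hx : 0 < x) (hy : 0 < y) :
    2 - x / y - y / x ≤ 0 := by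
  have h : 2 - x / y - y / x = -((x - y) ^ 2 / (x * y)) := by field_simp; ring
  rw [h, neg_nonpos]
  positivity

lemma volterra_incidence_eq {S Ss I Is : ℝ} (μ β : ℝ) (hS : S ≠ 0) (hSs : Ss ≠ 0)
    (hI : I ≠ 0) :
    (1 - Ss / S) * (μ * (Ss - S) + β * (Ss * Is - S * I))
      + (1 - Is / I) * (β * S * I - β * Ss * I)
      = (β * Is * Ss + μ * Ss) * (2 - S / Ss - Ss / S) := by
  field_simp
  ring

lemma volterra_transfer_eq {X Xs I Is : ℝ} (hX : X ≠ 0) (hXs : Xs ≠ 0)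
    (hI : I ≠ 0) (hIs : Is ≠ 0) :
    (1 - Xs / X) * (Xs * I / Is - X) + (1 - Is / I) * (X - Xs * I / Is)
      = Xs * (2 - X * Is / (Xs * I) - Xs * I / (X * Is)) := by
  field_simp
  ring

lemma sica_lyapunov_deriv_eq {Λ μ β ρ φ α ω ξ1 ξ2 Sstar Istar Cstar Astar S I C A : ℝ}
    (hξ1 : ξ1 ≠ 0) (hξ2 : ξ2 ≠ 0) (hSstar : Sstar ≠ 0) (hIstar : Istar ≠ 0)
    (hCstar : Cstar ≠ 0) (hAstar : Astar ≠ 0)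
    (heq1 : Λ - μ * Sstar - β * Sstar * Istar = 0)
    (heq2 : β * Sstar * Istar - (ρ + φ + μ) * Istar + α * Astar + ω * Cstar = 0)
    (heq3 : φ * Istar - ξ2 * Cstar = 0)
    (heq4 : ρ * Istar - ξ1 * Astar = 0)
    (hS : S ≠ 0) (hI : I ≠ 0) (hC : C ≠ 0) (hA : A ≠ 0) :
    (1 - Sstar / S) * (Λ - μ * S - β * S * I)
      + (1 - Istar / I) * (β * S * I - (ρ + φ + μ) * I + α * A + ω * C)
      + (ω / ξ2) * (1 - Cstar / C) * (φ * I - ξ2 * C)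
      + (α / ξ1) * (1 - Astar / A) * (ρ * I - ξ1 * A)
      = (β * Istar * Sstar + μ * Sstar) * (2 - S / Sstar - Sstar / S)
        + α * Astar * (2 - A * Istar / (Astar * I) - Astar * I / (A * Istar))
        + ω * Cstar * (2 - C * Istar / (Cstar * I) - Cstar * I / (C * Istar)) := by
  have hS_eq : Λ - μ * S - β * S * I = μ * (Sstar - S) + β * (Sstar * Istar - S * I) := by
    linear_combination heq1
  have hI_eq : β * S * I - (ρ + φ + μ) * I + α * A + ω * C
      = (β * S * I - β * Sstar * I) + α * (A - Astar * I / Istar)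
        + ω * (C - Cstar * I / Istar) := by
    field_simp
    linear_combination I * heq2
  have hC_eq : ω / ξ2 * (φ * I - ξ2 * C) = ω * (Cstar * I / Istar - C) := by
    field_simp
    linear_combination ω * I * heq3
  have hA_eq : α / ξ1 * (ρ * I - ξ1 * A) = α * (Astar * I / Istar - A) := by
    field_simp
    linear_combination α * I * heq4
  calc
    _ = ((1 - Sstar / S) * (μ * (Sstar - S) + β * (Sstar * Istar - S * I))
          + (1 - Istar / I) * (β * S * I - β * Sstar * I))
        + α * ((1 - Astar / A) * (Astar * I / Istar - A)
          + (1 - Istar / I) * (A - Astar * I / Istar))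
        + ω * ((1 - Cstar / C) * (Cstar * I / Istar - C)
          + (1 - Istar / I) * (C - Cstar * I / Istar)) := by
      rw [hS_eq, hI_eq]
      linear_combination (1 - Cstar / C) * hC_eq + (1 - Astar / A) * hA_eq
    _ = _ := by
      rw [volterra_incidence_eq μ β hS hSstar hI, volterra_transfer_eq hA hAstar hI hIstar,
        volterra_transfer_eq hC hCstar hI hIstar]
      ring

theorem sica_endemic_lyapunov_general
    (Λ μ β ρ φ α ω : ℝ)
    (hμ : 0 < μ) (hβ : 0 < β) (hρ : 0 < ρ)
    (hφ : 0 < φ) (hα : 0 < α) (hω : 0 < ω)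
    (ξ1 ξ2 : ℝ)
    (Sstar Istar Cstar Astar : ℝ)
    (hSstar : 0 < Sstar) (hIstar : 0 < Istar) (hCstar : 0 < Cstar) (hAstar : 0 < Astar)
    -- equilibrium conditions
    (heq1 : Λ - μ * Sstar - β * Sstar * Istar = 0)
    (heq2 : β * Sstar * Istar - (ρ + φ + μ) * Istar + α * Astar + ω * Cstar = 0)
    (heq3 : φ * Istar - ξ2 * Cstar = 0)
    (heq4 : ρ * Istar - ξ1 * Astar = 0)
    (S I C A : ℝ) (hS : 0 < S) (hI : 0 < I) (hC : 0 < C) (hA : 0 < A) :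
    (1 - Sstar / S) * (Λ - μ * S - β * S * I)
      + (1 - Istar / I) * (β * S * I - (ρ + φ + μ) * I + α * A + ω * C)
      + (ω / ξ2) * (1 - Cstar / C) * (φ * I - ξ2 * C)
      + (α / ξ1) * (1 - Astar / A) * (ρ * I - ξ1 * A)
      = (β * Istar * Sstar + μ * Sstar) * (2 - S / Sstar - Sstar / S)
        + α * Astar * (2 - A * Istar / (Astar * I) - Astar * I / (A * Istar))
        + ω * Cstar * (2 - C * Istar / (Cstar * I) - Cstar * I / (C * Istar)) ∧
    (1 - Sstar / S) * (Λ - μ * S - β * S * I)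
      + (1 - Istar / I) * (β * S * I - (ρ + φ + μ) * I + α * A + ω * C)
      + (ω / ξ2) * (1 - Cstar / C) * (φ * I - ξ2 * C)
      + (α / ξ1) * (1 - Astar / A) * (ρ * I - ξ1 * A) ≤ 0 := by
  have hξ1 : ξ1 ≠ 0 := by rintro rfl; linarith [mul_pos hρ hIstar]
  have hξ2 : ξ2 ≠ 0 := by rintro rfl; linarith [mul_pos hφ hIstar]
  have key := sica_lyapunov_deriv_eq hξ1 hξ2 hSstar.ne' hIstar.ne' hCstar.ne' hAstar.ne'
    heq1 heq2 heq3 heq4 hS.ne' hI.ne' hC.ne' hA.ne'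
  refine ⟨key, key ▸ ?_⟩
  exact add_nonpos (add_nonpos
    (mul_nonpos_of_nonneg_of_nonpos (by positivity) (two_sub_div_sub_div_nonpos hS hSstar))
    (mul_nonpos_of_nonneg_of_nonpos (by positivity)
      (two_sub_div_sub_div_nonpos (mul_pos hA hIstar) (mul_pos hAstar hI))))
    (mul_nonpos_of_nonneg_of_nonpos (by positivity)
      (two_sub_div_sub_div_nonpos (mul_pos hC hIstar) (mul_pos hCstar hI)))

theorem sica_endemic_lyapunov
    (Λ μ β ρ φ α ω d : ℝ)
    (hΛ : 0 < Λ) (hμ : 0 < μ) (hβ : 0 < β) (hρ : 0 < ρ)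
    (hφ : 0 < φ) (hα : 0 < α) (hω : 0 < ω) (hd : 0 < d)
    (ξ1 ξ2 : ℝ) (hξ1 : ξ1 = α + μ + d) (hξ2 : ξ2 = ω + μ)
    (Sstar Istar Cstar Astar : ℝ)
    (hSstar : 0 < Sstar) (hIstar : 0 < Istar) (hCstar : 0 < Cstar) (hAstar : 0 < Astar)
    -- equilibrium conditions
    (heq1 : Λ - μ * Sstar - β * Sstar * Istar = 0)
    (heq2 : β * Sstar * Istar - (ρ + φ + μ) * Istar + α * Astar + ω * Cstar = 0)
    (heq3 : φ * Istar - ξ2 * Cstar = 0)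
    (heq4 : ρ * Istar - ξ1 * Astar = 0)
    (S I C A : ℝ) (hS : 0 < S) (hI : 0 < I) (hC : 0 < C) (hA : 0 < A) :
    (1 - Sstar / S) * (Λ - μ * S - β * S * I)
      + (1 - Istar / I) * (β * S * I - (ρ + φ + μ) * I + α * A + ω * C)
      + (ω / ξ2) * (1 - Cstar / C) * (φ * I - ξ2 * C)
      + (α / ξ1) * (1 - Astar / A) * (ρ * I - ξ1 * A)
      = (β * Istar * Sstar + μ * Sstar) * (2 - S / Sstar - Sstar / S)
        + α * Astar * (2 - A * Istar / (Astar * I) - Astar * I / (A * Istar))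
        + ω * Cstar * (2 - C * Istar / (Cstar * I) - Cstar * I / (C * Istar)) ∧
    (1 - Sstar / S) * (Λ - μ * S - β * S * I)
      + (1 - Istar / I) * (β * S * I - (ρ + φ + μ) * I + α * A + ω * C)
      + (ω / ξ2) * (1 - Cstar / C) * (φ * I - ξ2 * C)
      + (α / ξ1) * (1 - Astar / A) * (ρ * I - ξ1 * A) ≤ 0 :=
  sica_endemic_lyapunov_general Λ μ β ρ φ α ω hμ hβ hρ hφ hα hω ξ1 ξ2 Sstar Istar Cstar Astar hSstar
    hIstar hCstar hAstar heq1 heq2 heq3 heq4 S I C A hS hI hC hA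
end

section
/- Let $x:[t_0,\infty)\to\mathbb{R}$ be continuously differentiable, $x^*\in\mathbb{R}$, and $0<\alpha\le 1$. Then for all $t\ge t_0$, $\frac{1}{2}\,{}^{C}_{t_0}D^{\alpha}_t\left[(x(t)-x^*)^2\right]\le (x(t)-x^*)\,{}^{C}_{t_0}D^{\alpha}_t\,x(t)$. -/
/-!
For `α < 1` the gap between the two sides is `1 / Γ(1 - α)` times `-∫ f'(y) (t - y)^(-α) dy`,
where `f y = (x t - x y)^2 / 2` is nonnegative and vanishes at `t`. Integrating by parts on
`[t0, b]` bounds this integral by `f b (t - b)^(-α)`, the other two terms having the sign of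
`f ≥ 0`; as `f t = 0` and `f` is differentiable at `t`, that bound is `O((t - b)^(1 - α))`
and tends to `0` as `b → t⁻`. For `α = 1` both sides agree by the chain rule.
-/

open MeasureTheory Filter Set Topology

lemma intervalIntegrable_div_rpow_sub {g : ℝ → ℝ} {t0 t α : ℝ} (hα : α < 1) (ht : t0 ≤ t)
    (hg : ContinuousOn g (Icc t0 t)) :
    IntervalIntegrable (fun y => g y / (t - y) ^ α) volume t0 t := by
  have hker : IntervalIntegrable (fun y => (t - y) ^ (-α)) volume t0 t := by
    simpa using (intervalIntegral.intervalIntegrable_rpow' (a := t - t0) (b := 0)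
      (r := -α) (by linarith)).comp_sub_left t
  have hprod := hker.mul_continuousOn (uIcc_of_le ht ▸ hg)
  rw [intervalIntegrable_iff, uIoc_of_le ht] at hprod ⊢
  refine hprod.congr_fun (fun y hy => ?_) measurableSet_Ioc
  dsimp only
  rw [Real.rpow_neg (by linarith [hy.2]), div_eq_mul_inv, mul_comm]

lemma integral_div_rpow_sub_le {f f' : ℝ → ℝ} {t0 b t α : ℝ} (hα : 0 ≤ α) (hb : t0 ≤ b)
    (hbt : b < t) (hf : ∀ y ∈ Icc t0 b, HasDerivAt f (f' y) y)
    (hf' : IntervalIntegrable f' volume t0 b) (hf0 : ∀ y ∈ Icc t0 b, 0 ≤ f y) :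
    ∫ y in t0..b, f' y / (t - y) ^ α ≤ f b / (t - b) ^ α := by
  have hpos : ∀ y ∈ Icc t0 b, 0 < t - y := fun y hy => by linarith [hy.2]
  have hker : ∀ y ∈ uIcc t0 b,
      HasDerivAt (fun y => (t - y) ^ (-α)) (α * (t - y) ^ (-α - 1)) y := by
    intro y hy
    rw [uIcc_of_le hb] at hy
    refine ((Real.hasDerivAt_rpow_const (Or.inl (hpos y hy).ne')).comp y
      ((hasDerivAt_id y).const_sub t)).congr_deriv ?_
    ring
  have hker' : IntervalIntegrable (fun y => α * (t - y) ^ (-α - 1)) volume t0 b := by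
    refine (continuousOn_const.mul (ContinuousOn.rpow_const (by fun_prop) ?_)).intervalIntegrable
    exact fun y hy => Or.inl (hpos y (uIcc_of_le hb ▸ hy)).ne'
  have hparts := intervalIntegral.integral_mul_deriv_eq_deriv_mul hker
    (fun y hy => hf y (uIcc_of_le hb ▸ hy)) hker' hf'
  have hrem : 0 ≤ ∫ y in t0..b, α * (t - y) ^ (-α - 1) * f y :=
    intervalIntegral.integral_nonneg hb fun y hy =>
      mul_nonneg (mul_nonneg hα (Real.rpow_nonneg (hpos y hy).le _)) (hf0 y hy)
  have hinit : 0 ≤ (t - t0) ^ (-α) * f t0 :=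
    mul_nonneg (Real.rpow_nonneg (by linarith) _) (hf0 t0 ⟨le_rfl, hb⟩)
  calc ∫ y in t0..b, f' y / (t - y) ^ α = ∫ y in t0..b, (t - y) ^ (-α) * f' y := by
        refine intervalIntegral.integral_congr fun y hy => ?_
        rw [uIcc_of_le hb] at hy
        simp only [Real.rpow_neg (hpos y hy).le, div_eq_mul_inv, mul_comm]
    _ ≤ (t - b) ^ (-α) * f b := by linarith
    _ = f b / (t - b) ^ α := by rw [Real.rpow_neg (by linarith), div_eq_mul_inv, mul_comm]

lemma tendsto_div_rpow_sub_nhdsLT {f : ℝ → ℝ} {f' t α : ℝ} (hα : α < 1)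
    (hf : HasDerivAt f f' t) (hft : f t = 0) :
    Tendsto (fun b => f b / (t - b) ^ α) (𝓝[<] t) (𝓝 0) := by
  have hslope : Tendsto (slope f t) (𝓝[<] t) (𝓝 f') :=
    (hasDerivAt_iff_tendsto_slope.1 hf).mono_left (nhdsLT_le_nhdsNE t)
  have hpow : Tendsto (fun b => (t - b) ^ (1 - α)) (𝓝[<] t) (𝓝 0) := by
    have hcont : Continuous fun b : ℝ => (t - b) ^ (1 - α) :=
      (continuous_const.sub continuous_id).rpow_const fun _ => Or.inr (by linarith)
    simpa [Real.zero_rpow (by linarith : 1 - α ≠ 0)] using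
      (hcont.tendsto t).mono_left nhdsWithin_le_nhds
  -- `f b / (t - b) ^ α = -(slope f t b) * (t - b) ^ (1 - α)` to the left of `t`
  have hlim := (hslope.neg.mul hpow)
  rw [mul_zero] at hlim
  refine hlim.congr' (eventually_nhdsWithin_of_forall fun b (hb : b < t) => ?_)
  have htb : 0 < t - b := by linarith
  rw [slope_def_field, hft, sub_zero, Real.rpow_sub htb, Real.rpow_one,
    show b - t = -(t - b) by ring]
  field_simp

lemma integral_div_rpow_sub_nonpos {f f' : ℝ → ℝ} {t0 t α : ℝ} (hα0 : 0 ≤ α) (hα1 : α < 1)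
    (ht : t0 ≤ t) (hf : ∀ y ∈ Icc t0 t, HasDerivAt f (f' y) y) (hf' : ContinuousOn f' (Icc t0 t))
    (hf0 : ∀ y ∈ Icc t0 t, 0 ≤ f y) (hft : f t = 0) :
    ∫ y in t0..t, f' y / (t - y) ^ α ≤ 0 := by
  rcases ht.eq_or_lt with rfl | ht
  · simp
  set G : ℝ → ℝ := fun b => ∫ y in t0..b, f' y / (t - y) ^ α
  have hGcont : ContinuousOn G (Icc t0 t) := by
    have hint := intervalIntegrable_div_rpow_sub hα1 ht.le hf'
    rw [intervalIntegrable_iff'] at hint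
    simpa [uIcc_of_le ht.le] using intervalIntegral.continuousOn_primitive_interval hint
  have hGt : Tendsto G (𝓝[<] t) (𝓝 (G t)) :=
    (hGcont t ⟨ht.le, le_rfl⟩).mono_of_mem_nhdsWithin
      (mem_of_superset (Ioo_mem_nhdsLT ht) Ioo_subset_Icc_self)
  have hbound : ∀ᶠ b in 𝓝[<] t, G b ≤ f b / (t - b) ^ α := by
    filter_upwards [Ioo_mem_nhdsLT ht] with b hb
    exact integral_div_rpow_sub_le hα0 hb.1.le hb.2
      (fun y hy => hf y ⟨hy.1, hy.2.trans hb.2.le⟩)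
      ((hf'.mono (Icc_subset_Icc_right hb.2.le)).intervalIntegrable_of_Icc hb.1.le)
      (fun y hy => hf0 y ⟨hy.1, hy.2.trans hb.2.le⟩)
  exact le_of_tendsto_of_tendsto hGt
    (tendsto_div_rpow_sub_nhdsLT hα1 (hf t ⟨ht.le, le_rfl⟩) hft) hbound

theorem caputo_quadratic_estimate
    (t0 α xstar : ℝ) (x : ℝ → ℝ)
    (hx : ContDiff ℝ 1 x)
    (hα0 : 0 < α) (hα1 : α ≤ 1)
    (t : ℝ) (ht : t0 ≤ t) :
    (1 / 2) * caputo t0 α (fun τ => (x τ - xstar) ^ 2) t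
      ≤ (x t - xstar) * caputo t0 α x t := by
  have hx' : ∀ y, HasDerivAt x (deriv x y) y :=
    fun y => (hx.differentiable one_ne_zero y).hasDerivAt
  have hsq : ∀ y, deriv (fun τ => (x τ - xstar) ^ 2) y = 2 * (x y - xstar) * deriv x y :=
    fun y => (((hx' y).sub_const xstar).pow 2).deriv.trans (by ring)
  rcases hα1.eq_or_lt with rfl | hα1
  · simp only [caputo, if_pos, hsq]
    exact le_of_eq (by ring)
  set f : ℝ → ℝ := fun y => (x t - x y) ^ 2 / 2
  set f' : ℝ → ℝ := fun y => -((x t - x y) * deriv x y)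
  have hf : ∀ y ∈ Icc t0 t, HasDerivAt f (f' y) y := fun y _ =>
    ((((hx' y).const_sub (x t)).pow 2).div_const 2).congr_deriv (by ring)
  have hcont := hx.continuous_deriv le_rfl
  have hint : ∀ g : ℝ → ℝ, Continuous g →
      IntervalIntegrable (fun y => g y / (t - y) ^ α) volume t0 t :=
    fun g hg => intervalIntegrable_div_rpow_sub hα1 ht hg.continuousOn
  have hgap : (x t - xstar) * (∫ y in t0..t, deriv x y / (t - y) ^ α)
      - (1 / 2) * ∫ y in t0..t, deriv (fun τ => (x τ - xstar) ^ 2) y / (t - y) ^ α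
      = -∫ y in t0..t, f' y / (t - y) ^ α := by
    simp only [hsq]
    rw [← intervalIntegral.integral_const_mul, ← intervalIntegral.integral_const_mul,
      ← intervalIntegral.integral_sub ((hint _ hcont).const_mul _)
        ((hint _ (by fun_prop)).const_mul _), ← intervalIntegral.integral_neg]
    exact intervalIntegral.integral_congr fun y _ => by ring
  have hneg := integral_div_rpow_sub_nonpos hα0.le hα1 ht hf
    ((continuous_const.sub hx.continuous).mul hcont).neg.continuousOn
    (fun y _ => by positivity) (by simp [f])
  have hΓ : 0 < 1 / Real.Gamma (1 - α) := one_div_pos.2 (Real.Gamma_pos_of_pos (by linarith))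
  simp only [caputo, if_neg hα1.ne]
  nlinarith
end

section
/- Consider the SICA system with positive parameters and $R_0=\frac{\beta\xi_1\xi_2}{\mathcal{N}}\cdot\frac{\Lambda}{\mu}$ where $\xi_1=\alpha+\mu+d$, $\xi_2=\omega+\mu$, $\mathcal{N}=\mu[\xi_2(\rho+\xi_1)+\xi_1\phi+\rho d]+\rho\omega d$. If $R_0>1$, then the system $\Lambda-\mu S-\beta SI=0$, $\beta SI-(\rho+\phi+\mu)I+\alpha A+\omega C=0$, $\phi I-\xi_2 C=0$, $\rho I-\xi_1 A=0$ has a solution $(S^*,I^*,C^*,A^*)$ with all coordinates strictly positive. -/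
/-!
The carrier and AIDS classes are slaved to the infected class, `C = φ I / ξ₂` and
`A = ρ I / ξ₁`. Substituting them, the `I`-equation reads `I (β S ξ₁ ξ₂ - 𝒩) = 0`, since
`𝒩 = (ρ + φ + μ) ξ₁ ξ₂ - α ρ ξ₂ - ω φ ξ₁`; so an endemic state has `S* = 𝒩 / (β ξ₁ ξ₂)`,
and the `S`-equation then gives `I* = (Λ - μ S*) / (β S*)`. As `R₀ = Λ / (μ S*)`, this `I*`
is positive exactly when `R₀ > 1`.
-/

lemma sica_infected_eq_zero {β S I ρ φ μ α ω ξ₁ ξ₂ : ℝ} (hξ₁ : ξ₁ ≠ 0) (hξ₂ : ξ₂ ≠ 0)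
    (hS : β * S * ξ₁ * ξ₂ = (ρ + φ + μ) * ξ₁ * ξ₂ - α * ρ * ξ₂ - ω * φ * ξ₁) :
    β * S * I - (ρ + φ + μ) * I + α * (ρ * I / ξ₁) + ω * (φ * I / ξ₂) = 0 := by
  field_simp
  linear_combination I * hS

lemma sica_susceptible_eq_zero {Λ μ β S : ℝ} (hβS : β * S ≠ 0) :
    Λ - μ * S - β * S * ((Λ - μ * S) / (β * S)) = 0 := by
  rw [mul_div_cancel₀ _ hβS, sub_self]

lemma sica_reproduction_number_eq {β ξ₁ ξ₂ N Λ μ : ℝ} (hβ : β ≠ 0) (hξ₁ : ξ₁ ≠ 0)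
    (hξ₂ : ξ₂ ≠ 0) (hN : N ≠ 0) (hμ : μ ≠ 0) :
    β * ξ₁ * ξ₂ / N * (Λ / μ) = Λ / (μ * (N / (β * ξ₁ * ξ₂))) := by
  field_simp

theorem sica_endemic_equilibrium_exists_general
    (Λ μ β ρ φ α ω d : ℝ)
    (hμ : 0 < μ) (hβ : 0 < β) (hρ : 0 < ρ)
    (hφ : 0 < φ) (hα : 0 < α) (hω : 0 < ω) (hd : 0 < d)
    (ξ1 ξ2 N R0 : ℝ)
    (hξ1 : ξ1 = α + μ + d) (hξ2 : ξ2 = ω + μ)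
    (hN : N = μ * (ξ2 * (ρ + ξ1) + ξ1 * φ + ρ * d) + ρ * ω * d)
    (hR0 : R0 = β * ξ1 * ξ2 / N * (Λ / μ))
    (hR0gt : 1 < R0) :
    ∃ Sstar Istar Cstar Astar : ℝ,
      0 < Sstar ∧ 0 < Istar ∧ 0 < Cstar ∧ 0 < Astar ∧
      Λ - μ * Sstar - β * Sstar * Istar = 0 ∧
      β * Sstar * Istar - (ρ + φ + μ) * Istar + α * Astar + ω * Cstar = 0 ∧
      φ * Istar - ξ2 * Cstar = 0 ∧
      ρ * Istar - ξ1 * Astar = 0 := by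
  have hξ1_pos : 0 < ξ1 := by rw [hξ1]; positivity
  have hξ2_pos : 0 < ξ2 := by rw [hξ2]; positivity
  have hN_pos : 0 < N := by rw [hN]; positivity
  have hN_eq : N = (ρ + φ + μ) * ξ1 * ξ2 - α * ρ * ξ2 - ω * φ * ξ1 := by
    subst hN hξ1 hξ2; ring
  set S := N / (β * ξ1 * ξ2) with hS
  have hS_pos : 0 < S := by positivity
  have hμS : μ * S < Λ := by
    rwa [hR0, sica_reproduction_number_eq hβ.ne' hξ1_pos.ne' hξ2_pos.ne' hN_pos.ne' hμ.ne',
      ← hS, one_lt_div (by positivity)] at hR0gt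
  set I := (Λ - μ * S) / (β * S)
  have hI_pos : 0 < I := div_pos (sub_pos.mpr hμS) (by positivity)
  refine ⟨S, I, φ * I / ξ2, ρ * I / ξ1, hS_pos, hI_pos, by positivity, by positivity,
    sica_susceptible_eq_zero (by positivity), sica_infected_eq_zero hξ1_pos.ne' hξ2_pos.ne' ?_,
    by rw [mul_div_cancel₀ _ hξ2_pos.ne', sub_self], by rw [mul_div_cancel₀ _ hξ1_pos.ne', sub_self]⟩
  rw [hS, ← hN_eq]
  field_simp

theorem sica_endemic_equilibrium_exists
    (Λ μ β ρ φ α ω d : ℝ)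
    (hΛ : 0 < Λ) (hμ : 0 < μ) (hβ : 0 < β) (hρ : 0 < ρ)
    (hφ : 0 < φ) (hα : 0 < α) (hω : 0 < ω) (hd : 0 < d)
    (ξ1 ξ2 N R0 : ℝ)
    (hξ1 : ξ1 = α + μ + d) (hξ2 : ξ2 = ω + μ)
    (hN : N = μ * (ξ2 * (ρ + ξ1) + ξ1 * φ + ρ * d) + ρ * ω * d)
    (hR0 : R0 = β * ξ1 * ξ2 / N * (Λ / μ))
    (hR0gt : 1 < R0) :
    ∃ Sstar Istar Cstar Astar : ℝ,
      0 < Sstar ∧ 0 < Istar ∧ 0 < Cstar ∧ 0 < Astar ∧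
      Λ - μ * Sstar - β * Sstar * Istar = 0 ∧
      β * Sstar * Istar - (ρ + φ + μ) * Istar + α * Astar + ω * Cstar = 0 ∧
      φ * Istar - ξ2 * Cstar = 0 ∧
      ρ * Istar - ξ1 * Astar = 0 :=
  sica_endemic_equilibrium_exists_general Λ μ β ρ φ α ω d hμ hβ hρ hφ hα hω hd ξ1 ξ2 N R0 hξ1 hξ2 hN
    hR0 hR0gt
end
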